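/- Let X be a compact topological space and let μ be a finite Borel measure on X with V := μ(X) > 0. Let K > 0 and let (f_n)_{n∈ℕ} be a sequence of continuous functions f_n : X → ℝ such that f_n(p) ≤ f_{n+1}(p) for every n ∈ ℕ and every p ∈ X, and such that ∫_X min(f_n(p), 0) dμ(p) → −K/2 as n → ∞. Then there exists a point p ∈ X such that f_n(p) ≤ −K/(3V) for every n ∈ ℕ. -/

import Mathlib

open MeasureTheory Filter Set

/-!
An integrable function on a finite measure space takes a value at most its mean. Since the integrals
`∫ min(f n, 0) dμ` increase to `-K/2`, each is `≤ -K/2 < V · (-K/(3V))`, so every sublevel set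
`{f n ≤ -K/(3V)}` is nonempty. These sets are closed and decreasing in `n`, so by compactness they
have a common point.
-/

theorem exists_forall_le_of_compactSpace {X α : Type*} [TopologicalSpace X] [CompactSpace X]
    [TopologicalSpace α] [Preorder α] [OrderClosedTopology α] {f : ℕ → X → α} {c : α}
    (hcont : ∀ n, Continuous (f n)) (hmono : ∀ n p, f n p ≤ f (n + 1) p)
    (hex : ∀ n, ∃ p, f n p ≤ c) : ∃ p, ∀ n, f n p ≤ c := by
  have hclosed : ∀ n, IsClosed {p | f n p ≤ c} := fun n => isClosed_le (hcont n) continuous_const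
  obtain ⟨p, hp⟩ := IsCompact.nonempty_iInter_of_sequence_nonempty_isCompact_isClosed
    (fun n => {p | f n p ≤ c}) (fun n p hp => (hmono n p).trans hp) hex
    (hclosed 0).isCompact hclosed
  exact ⟨p, fun n => mem_iInter.1 hp n⟩

theorem exists_le_of_integral_le_measureReal_mul {X : Type*} [MeasurableSpace X]
    {μ : Measure X} [IsFiniteMeasure μ] (hμ : μ ≠ 0) {g : X → ℝ} (hg : Integrable g μ) {c : ℝ}
    (h : ∫ p, g p ∂μ ≤ μ.real univ * c) : ∃ p, g p ≤ c := by
  have : NeZero μ := ⟨hμ⟩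
  obtain ⟨p, hp⟩ := exists_le_average hμ hg
  refine ⟨p, hp.trans ?_⟩
  rwa [average_eq, smul_eq_mul, inv_mul_le_iff₀ measureReal_univ_pos]

/-- On a compact space with a finite Borel measure of positive total mass `V`,
if continuous functions `f n` are pointwise nondecreasing in `n` and
`∫ min(f n, 0) dμ → -K/2` with `K > 0`, then there is a point `p` with
`f n p ≤ -K/(3V)` for all `n`. -/
theorem stmt_7 {X : Type*} [TopologicalSpace X] [CompactSpace X]
    [MeasurableSpace X] [BorelSpace X] (μ : Measure X) [IsFiniteMeasure μ]
    (V : ℝ) (hV : V = (μ Set.univ).toReal) (hVpos : 0 < V)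
    (K : ℝ) (hK : 0 < K)
    (f : ℕ → X → ℝ)
    (hcont : ∀ n, Continuous (f n))
    (hmono : ∀ n, ∀ p : X, f n p ≤ f (n + 1) p)
    (hlim : Tendsto (fun n => ∫ p, min (f n p) 0 ∂μ) atTop (nhds (-K / 2))) :
    ∃ p : X, ∀ n : ℕ, f n p ≤ -K / (3 * V) := by
  have hμ : μ ≠ 0 := by
    rintro rfl
    simp [hV] at hVpos
  have hint : ∀ n, Integrable (fun p => min (f n p) 0) μ := fun n =>
    ((hcont n).min continuous_const).integrable_of_hasCompactSupport
      (HasCompactSupport.of_compactSpace _)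
  have hint_mono : Monotone fun n => ∫ p, min (f n p) 0 ∂μ := monotone_nat_of_le_succ fun n =>
    integral_mono (hint n) (hint (n + 1)) fun p => min_le_min_right 0 (hmono n p)
  have hc : -K / (3 * V) < 0 := div_neg_of_neg_of_pos (by linarith) (by linarith)
  refine exists_forall_le_of_compactSpace hcont hmono fun n => ?_
  have hle : ∫ p, min (f n p) 0 ∂μ ≤ μ.real univ * (-K / (3 * V)) :=
    calc ∫ p, min (f n p) 0 ∂μ ≤ -K / 2 := hint_mono.ge_of_tendsto hlim n
      _ ≤ -K / 3 := by linarith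
      _ = μ.real univ * (-K / (3 * V)) := by rw [measureReal_def, ← hV]; field_simp
  obtain ⟨p, hp⟩ := exists_le_of_integral_le_measureReal_mul hμ (hint n) hle
  exact ⟨p, (min_le_iff.1 hp).resolve_right hc.not_ge⟩
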